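/- arXiv:math/0504530 — 5 statements merged into one kernel-verified Lean document; each statement's English description precedes it below -/
import Mathlib

section
/- Let $u_0,\dots,u_n$ be nonnegative reals with $u_i^2 \le u_{i-1}u_{i+1}$ for $0<i<n$, and suppose $\sum_{i=0}^n \binom{n}{i} u_i = 1$. Let $0<\rho<1$ and suppose $u_0 \le (1-\rho)^n$. Then for every $k$ with $0\le k\le n$, $\sum_{i=k}^n \binom{n}{i} u_i \ge \sum_{i=k}^n \binom{n}{i} \rho^i (1-\rho)^{n-i}$. -/
theorem stmt_0 (n : ℕ) (u : ℕ → ℝ)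
    (hu : ∀ i ≤ n, 0 ≤ u i)
    (hlc : ∀ i, 0 < i → i < n → (u i)^2 ≤ u (i-1) * u (i+1))
    (hsum : ∑ i ∈ Finset.range (n+1), (n.choose i : ℝ) * u i = 1)
    (ρ : ℝ) (hρ0 : 0 < ρ) (hρ1 : ρ < 1)
    (h0 : u 0 ≤ (1-ρ)^n) :
    ∀ k ≤ n, ∑ i ∈ Finset.Icc k n, (n.choose i : ℝ) * u i ≥
      ∑ i ∈ Finset.Icc k n, (n.choose i : ℝ) * ρ^i * (1-ρ)^(n-i) := by
  have hρ' : 0 < 1 - ρ := by linarith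
  set v : ℕ → ℝ := fun i => ρ^i * (1-ρ)^(n-i) with hvdef
  have hv : ∀ i, 0 < v i := fun i => mul_pos (pow_pos hρ0 _) (pow_pos hρ' _)
  set r : ℕ → ℝ := fun i => u i / v i with hrdef
  have hrnn : ∀ i ≤ n, 0 ≤ r i := fun i hi => div_nonneg (hu i hi) (hv i).le
  have hr0 : r 0 ≤ 1 := by
    have : v 0 = (1-ρ)^n := by simp [hvdef]
    rw [hrdef]
    simp only
    rw [div_le_one (hv 0), this]
    exact h0
  -- v is log-linear
  have hvsq : ∀ j, 1 ≤ j → j + 1 ≤ n → v j ^ 2 = v (j-1) * v (j+1) := by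
    intro j hj1 hjn
    have e1 : ρ^(j-1) * ρ^(j+1) = ρ^j * ρ^j := by
      rw [← pow_add, ← pow_add]; congr 1; omega
    have e2 : (1-ρ)^(n-(j-1)) * (1-ρ)^(n-(j+1)) = (1-ρ)^(n-j) * (1-ρ)^(n-j) := by
      rw [← pow_add, ← pow_add]; congr 1; omega
    simp only [hvdef]
    nlinarith [e1, e2]
  -- backward propagation of non-increase
  have step : ∀ j, 1 ≤ j → j + 1 ≤ n → r (j+1) ≤ r j → r j ≤ r (j-1) := by
    intro j hj1 hjn hdec
    have hlcj := hlc j (by omega) (by omega)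
    have hrsq : r j ^ 2 ≤ r (j-1) * r (j+1) := by
      have h1 : r j ^ 2 = u j ^ 2 / (v (j-1) * v (j+1)) := by
        rw [hrdef]; simp only
        rw [div_pow, hvsq j hj1 hjn]
      have h2 : r (j-1) * r (j+1) = (u (j-1) * u (j+1)) / (v (j-1) * v (j+1)) := by
        rw [hrdef]; simp only; rw [div_mul_div_comm]
      rw [h1, h2]
      exact div_le_div_of_nonneg_right hlcj (mul_pos (hv _) (hv _)).le |>.trans_eq rfl
    rcases eq_or_lt_of_le (hrnn j (by omega)) with h | h
    · rw [← h]; exact hrnn (j-1) (by omega)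
    · have : r j ^ 2 ≤ r (j-1) * r j := by
        calc r j ^ 2 ≤ r (j-1) * r (j+1) := hrsq
        _ ≤ r (j-1) * r j := by
            apply mul_le_mul_of_nonneg_left hdec (hrnn (j-1) (by omega))
      nlinarith
  -- from a descent at j, all earlier steps are descents
  have down : ∀ j, j + 1 ≤ n → r (j+1) ≤ r j → ∀ l, l ≤ j → r (l+1) ≤ r l := by
    intro j
    induction j with
    | zero =>
      intro h1 h2 l hl
      interval_cases l
      exact h2
    | succ p ih =>
      intro h1 h2 l hl
      rcases Nat.lt_succ_iff_lt_or_eq.mp (Nat.lt_succ_of_le hl) with h | h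
      · have hd : r (p+1) ≤ r p := by
          have := step (p+1) (by omega) (by omega) h2
          simpa using this
        exact ih (by omega) hd l (by omega)
      · subst h; exact h2
  -- decreasing chain: r a ≤ r 0
  have descchain : ∀ t, (∀ l, l < t → r (l+1) ≤ r l) → ∀ a, a ≤ t → r a ≤ r 0 := by
    intro t ht a
    induction a with
    | zero => intro; exact le_refl _
    | succ b ih =>
      intro hb
      calc r (b+1) ≤ r b := ht b (by omega)
      _ ≤ r 0 := ih (by omega)
  -- increasing chain
  have asc : ∀ a b, a ≤ b → (∀ j, a ≤ j → j < b → r j ≤ r (j+1)) → r a ≤ r b := by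
    intro a b
    induction b with
    | zero => intro hab _; interval_cases a; exact le_refl _
    | succ c ih =>
      intro hab hstep
      rcases Nat.lt_succ_iff_lt_or_eq.mp (Nat.lt_succ_of_le hab) with h | h
      · calc r a ≤ r c := ih (by omega) (fun j hj1 hj2 => hstep j hj1 (by omega))
        _ ≤ r (c+1) := hstep c (by omega) (by omega)
      · rw [h]
  -- the crossing point
  set S : Set ℕ := {k | ∀ j, k ≤ j → j ≤ n → v j ≤ u j} with hSdef
  have hSne : (n+1) ∈ S := by intro j hj1 hj2; omega
  set M : ℕ := sInf S with hMdef
  have hMmem : M ∈ S := Nat.sInf_mem ⟨n+1, hSne⟩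
  have hMle : M ≤ n + 1 := Nat.sInf_le hSne
  -- below M, u i ≤ v i
  have claim1 : ∀ i, i < M → i ≤ n → u i ≤ v i := by
    intro i hiM hin
    have hM1 : 1 ≤ M := by omega
    have hMnot : (M - 1) ∉ S := Nat.notMem_of_lt_sInf (by omega)
    have hMm1 : u (M-1) < v (M-1) := by
      simp only [hSdef, Set.mem_setOf_eq, not_forall] at hMnot
      obtain ⟨j, hj1, hj2, hj3⟩ := hMnot
      push_neg at hj3
      rcases Nat.lt_or_ge j M with h | h
      · have : j = M - 1 := by omega
        rwa [← this]
      · exact absurd (hMmem j h hj2) (not_le.mpr hj3)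
    have hrM1 : r (M-1) < 1 := by
      rw [hrdef]; simp only
      rw [div_lt_one (hv _)]
      exact hMm1
    rcases Nat.lt_or_ge i (M-1) with hi | hi
    · -- i < M - 1
      rcases eq_or_ne i 0 with rfl | hi0
      · have : v 0 = (1-ρ)^n := by simp [hvdef]
        rw [this]; exact h0
      · have hri : r i ≤ 1 := by
          by_cases hD : ∃ j, i ≤ j ∧ j + 1 ≤ M - 1 ∧ r (j+1) ≤ r j
          · obtain ⟨j, hj1, hj2, hj3⟩ := hD
            have hjn : j + 1 ≤ n := by omega
            have := down j hjn hj3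
            exact le_trans (descchain (j+1) (fun l hl => this l (by omega)) i (by omega)) hr0
          · push_neg at hD
            have : r i ≤ r (M-1) := by
              apply asc i (M-1) (by omega)
              intro j hj1 hj2
              exact (hD j hj1 (by omega)).le
            linarith
        rw [hrdef] at hri; simp only at hri
        rw [div_le_one (hv _)] at hri
        exact hri
    · have : i = M - 1 := by omega
      rw [this]; exact hMm1.le
  -- binomial theorem
  have hbin : ∑ i ∈ Finset.range (n+1), (n.choose i : ℝ) * v i = 1 := by
    have := add_pow ρ (1-ρ) n
    simp only [add_sub_cancel, one_pow] at this
    rw [this]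
    apply Finset.sum_congr rfl
    intro i _
    simp only [hvdef]
    ring
  intro k hk
  rcases Nat.lt_or_ge k M with hkM | hkM
  · -- complement argument
    have hhead : ∑ i ∈ Finset.range k, (n.choose i : ℝ) * u i ≤
        ∑ i ∈ Finset.range k, (n.choose i : ℝ) * v i := by
      apply Finset.sum_le_sum
      intro i hi
      simp only [Finset.mem_range] at hi
      exact mul_le_mul_of_nonneg_left (claim1 i (by omega) (by omega)) (Nat.cast_nonneg _)
    have hsplit : ∀ f : ℕ → ℝ, ∑ i ∈ Finset.range k, f i + ∑ i ∈ Finset.Icc k n, f i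
        = ∑ i ∈ Finset.range (n+1), f i := by
      intro f
      rw [← Finset.Ico_add_one_right_eq_Icc, Finset.range_eq_Ico, Finset.range_eq_Ico]
      exact Finset.sum_Ico_consecutive f (m := 0) (n := k) (k := n + 1) (by omega) (by omega)
    have e1 := hsplit (fun i => (n.choose i : ℝ) * u i)
    have e2 := hsplit (fun i => (n.choose i : ℝ) * v i)
    have hrhs : ∑ i ∈ Finset.Icc k n, (n.choose i : ℝ) * ρ^i * (1-ρ)^(n-i)
        = ∑ i ∈ Finset.Icc k n, (n.choose i : ℝ) * v i := by
      apply Finset.sum_congr rfl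
      intro i _
      simp only [hvdef]; ring
    rw [hrhs]
    rw [hsum] at e1
    rw [hbin] at e2
    linarith
  · -- termwise
    apply Finset.sum_le_sum
    intro i hi
    simp only [Finset.mem_Icc] at hi
    have := hMmem i (by omega) hi.2
    calc (n.choose i : ℝ) * ρ^i * (1-ρ)^(n-i) = (n.choose i : ℝ) * v i := by
          simp only [hvdef]; ring
    _ ≤ (n.choose i : ℝ) * u i := mul_le_mul_of_nonneg_left this (Nat.cast_nonneg _)
end

section
/- Let $\lambda \ge 1$ and set $c = 1/(2\lambda^2+8\lambda+6)$, $u_0=u_4=c\lambda^2$, $u_1=u_3=c\lambda$, $u_2=c$. Then $\sum_{i=0}^4 \binom{4}{i} u_i = 1$ and $u_i^2 \le u_{i-1}u_{i+1}$ for $i=1,2,3$; moreover, if $\lambda > 1$ there exists no random variable $W$ with values in $[0,1]$ such that $u_i = E[W^i(1-W)^{4-i}]$ for all $0\le i\le 4$. -/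
/-!
The first two claims are direct computations. For the third, if `u i = E[W^i (1-W)^(4-i)]`
then `E[(W^2 - λ W(1-W))^2] = u₄ - 2λ u₃ + λ² u₂ = 0`, so `W^2 = λ W(1-W)` almost surely;
applying the same to `1 - W` gives `(1-W)^2 = λ W(1-W)` almost surely. At a point where both
hold, `W = 1/2` and then `λ = 1`.
-/

open MeasureTheory Set

section Moments

variable {Ω : Type*} [MeasurableSpace Ω] {μ : Measure Ω} {W : Ω → ℝ}

lemma moments_one_sub {m : ℕ → ℝ}
    (hm : ∀ i ≤ 4, m i = ∫ ω, W ω ^ i * (1 - W ω) ^ (4 - i) ∂μ) :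
    ∀ i ≤ 4, m (4 - i) = ∫ ω, (1 - W ω) ^ i * (1 - (1 - W ω)) ^ (4 - i) ∂μ := by
  intro i hi
  simp only [hm (4 - i) (Nat.sub_le 4 i), Nat.sub_sub_self hi, sub_sub_cancel, mul_comm]

-- Expanded in the Bernstein monomials `w ^ i * (1 - w) ^ (4 - i)`, so the moments apply verbatim.
lemma sq_sub_mul_one_sub_eq (w lam : ℝ) :
    (w ^ 2 - lam * (w * (1 - w))) ^ 2 =
      w ^ 4 * (1 - w) ^ 0 - 2 * lam * (w ^ 3 * (1 - w) ^ 1) + lam ^ 2 * (w ^ 2 * (1 - w) ^ 2) := by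
  ring

variable [IsFiniteMeasure μ]

lemma integrable_pow_mul_one_sub_pow (hW : Measurable W)
    (hW01 : ∀ ω, W ω ∈ Icc (0 : ℝ) 1) (i j : ℕ) :
    Integrable (fun ω => W ω ^ i * (1 - W ω) ^ j) μ := by
  refine Integrable.of_mem_Icc 0 1 (by fun_prop) (ae_of_all _ fun ω => ?_)
  obtain ⟨h0, h1⟩ := hW01 ω
  exact ⟨by positivity,
    mul_le_one₀ (pow_le_one₀ h0 h1) (by positivity) (pow_le_one₀ (by linarith) (by linarith))⟩

lemma integrable_sq_sub_mul_one_sub (hW : Measurable W)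
    (hW01 : ∀ ω, W ω ∈ Icc (0 : ℝ) 1) (lam : ℝ) :
    Integrable (fun ω => (W ω ^ 2 - lam * (W ω * (1 - W ω))) ^ 2) μ := by
  have hint := integrable_pow_mul_one_sub_pow (μ := μ) hW hW01
  simp_rw [sq_sub_mul_one_sub_eq]
  exact ((hint 4 0).sub ((hint 3 1).const_mul _)).add ((hint 2 2).const_mul _)

lemma integral_sq_sub_mul_one_sub_eq_of_moments (hW : Measurable W)
    (hW01 : ∀ ω, W ω ∈ Icc (0 : ℝ) 1) {m : ℕ → ℝ}
    (hm : ∀ i ≤ 4, m i = ∫ ω, W ω ^ i * (1 - W ω) ^ (4 - i) ∂μ) (lam : ℝ) :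
    ∫ ω, (W ω ^ 2 - lam * (W ω * (1 - W ω))) ^ 2 ∂μ = m 4 - 2 * lam * m 3 + lam ^ 2 * m 2 := by
  have hint := integrable_pow_mul_one_sub_pow (μ := μ) hW hW01
  simp_rw [sq_sub_mul_one_sub_eq]
  rw [integral_add (by exact (hint 4 0).sub ((hint 3 1).const_mul _)) ((hint 2 2).const_mul _),
    integral_sub (hint 4 0) ((hint 3 1).const_mul _), integral_const_mul, integral_const_mul,
    hm 4 le_rfl, hm 3 (by norm_num), hm 2 (by norm_num)]

lemma ae_sq_eq_mul_one_sub_of_moments (hW : Measurable W)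
    (hW01 : ∀ ω, W ω ∈ Icc (0 : ℝ) 1) {m : ℕ → ℝ}
    (hm : ∀ i ≤ 4, m i = ∫ ω, W ω ^ i * (1 - W ω) ^ (4 - i) ∂μ) {lam : ℝ}
    (h : m 4 - 2 * lam * m 3 + lam ^ 2 * m 2 = 0) :
    ∀ᵐ ω ∂μ, W ω ^ 2 = lam * (W ω * (1 - W ω)) := by
  have hzero := integral_sq_sub_mul_one_sub_eq_of_moments hW hW01 hm lam
  rw [h, integral_eq_zero_iff_of_nonneg (fun ω => sq_nonneg _)
    (integrable_sq_sub_mul_one_sub hW hW01 lam)] at hzero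
  filter_upwards [hzero] with ω hω
  exact sub_eq_zero.mp (pow_eq_zero_iff two_ne_zero |>.mp hω)

end Moments

lemma eq_one_of_sq_eq_mul_of_one_sub_sq_eq_mul {w lam : ℝ} (h : w ^ 2 = lam * (w * (1 - w)))
    (h' : (1 - w) ^ 2 = lam * ((1 - w) * w)) : lam = 1 := by
  have hw : w = 1 / 2 := by linear_combination (h - h') / 2
  subst hw
  linarith

theorem stmt_6 (lam : ℝ) (hlam : 1 ≤ lam)
    (c : ℝ) (hc : c = 1 / (2*lam^2 + 8*lam + 6))
    (u : ℕ → ℝ) (hu0 : u 0 = c * lam^2) (hu1 : u 1 = c * lam) (hu2 : u 2 = c)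
    (hu3 : u 3 = c * lam) (hu4 : u 4 = c * lam^2) :
    (∑ i ∈ Finset.range 5, ((4:ℕ).choose i : ℝ) * u i = 1) ∧
    (∀ i, 1 ≤ i → i ≤ 3 → (u i)^2 ≤ u (i-1) * u (i+1)) ∧
    (1 < lam →
      ¬ ∃ (Ω : Type) (_ : MeasurableSpace Ω) (μ : Measure Ω) (_ : IsProbabilityMeasure μ)
          (W : Ω → ℝ), Measurable W ∧ (∀ ω, W ω ∈ Set.Icc (0:ℝ) 1) ∧
          ∀ i ≤ 4, u i = ∫ ω, (W ω)^i * (1 - W ω)^(4-i) ∂μ) := by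
  refine ⟨?_, ?_, ?_⟩
  · simp only [Finset.sum_range_succ, Finset.sum_range_zero, hu0, hu1, hu2, hu3, hu4, hc]
    norm_num [Nat.choose]
    field_simp
    ring
  · intro i h1 h3
    interval_cases i
    · rw [hu0, hu1, hu2]; exact le_of_eq (by ring)
    · rw [hu1, hu2, hu3]
      nlinarith [mul_le_mul_of_nonneg_left (one_le_pow₀ hlam : 1 ≤ lam ^ 2) (sq_nonneg c)]
    · rw [hu2, hu3, hu4]; exact le_of_eq (by ring)
  · rintro hlt ⟨Ω, _, μ, _, W, hW, hW01, hmom⟩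
    have hW01' : ∀ ω, 1 - W ω ∈ Icc (0 : ℝ) 1 :=
      fun ω => ⟨sub_nonneg.2 (hW01 ω).2, sub_le_self 1 (hW01 ω).1⟩
    have h := ae_sq_eq_mul_one_sub_of_moments hW hW01 hmom (lam := lam)
      (by rw [hu4, hu3, hu2]; ring)
    have h' := ae_sq_eq_mul_one_sub_of_moments (W := fun ω => 1 - W ω) (by fun_prop) hW01'
      (moments_one_sub hmom) (lam := lam) (by simp only [hu0, hu1, hu2]; ring)
    obtain ⟨ω, hω, hω'⟩ := (h.and h').exists
    rw [sub_sub_cancel] at hω'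
    exact hlt.ne' (eq_one_of_sq_eq_mul_of_one_sub_sq_eq_mul hω hω')
end

section
/- Suppose $J_1, J_2 \ge J_c$ with $J_1 < J_2$, where $\tanh(J_c)=1/2$, and let $t_J \ge 0$ denote the largest fixed point of $f_J(t)=\log(\cosh(J+t)/\cosh(t-J))$ (with $t_{J_c}=0$). Then $t_{J_2} - J_2 \ge t_{J_1} - J_1$ and $t_{J_2} + J_2 \ge t_{J_1} + J_1$. -/
/-!
Write `f_J(t) = log (cosh (J + t) / cosh (t - J))`. Shifting both `J` and `t` by `d ≥ 0` leaves
`t - J` unchanged, so `t_{J₁} + d ≤ f_{J₁ + d}(t_{J₁} + d)` reduces to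
`e^d cosh x ≤ cosh (x + 2d)` at `x = J₁ + t_{J₁}`, which holds because
`tanh x ≥ tanh J_c = 1/2`.
Since `f_J ≤ 2|J|`, the intermediate value theorem then gives a fixed point of `f_{J₂}` above
`t_{J₁} + (J₂ - J₁)`, and `t_{J₂}` is the largest one.
-/

open Real

theorem tanh_le_tanh {x y : ℝ} (h : x ≤ y) : tanh x ≤ tanh y := by
  have mem (z : ℝ) : tanh z ∈ Set.Ioo (-1) 1 := ⟨neg_one_lt_tanh z, tanh_lt_one z⟩
  rwa [← artanh_le_artanh_iff (mem x) (mem y), artanh_tanh, artanh_tanh]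

theorem cosh_add_le_exp_abs_mul_cosh (y z : ℝ) : cosh (y + z) ≤ exp |z| * cosh y := by
  have h₁ : exp y * exp z ≤ exp y * exp |z| := by gcongr; exact le_abs_self z
  have h₂ : exp (-y) * exp (-z) ≤ exp (-y) * exp |z| := by gcongr; exact neg_le_abs z
  rw [cosh_eq, cosh_eq, neg_add, exp_add, exp_add]
  linarith

theorem exp_le_cosh_two_mul_add_sinh_two_mul_div_two {d : ℝ} (hd : 0 ≤ d) :
    exp d ≤ cosh (2 * d) + sinh (2 * d) / 2 := by
  have hc : 1 ≤ cosh d := one_le_cosh d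
  have hs : 0 ≤ sinh d := sinh_nonneg_iff.2 hd
  rw [← cosh_add_sinh, cosh_two_mul, sinh_two_mul]
  nlinarith [mul_nonneg (zero_le_one.trans hc) (sub_nonneg.2 hc),
    mul_nonneg hs (add_nonneg hs (sub_nonneg.2 hc))]

theorem exp_mul_cosh_le_cosh_add_two_mul {x d : ℝ} (hx : 1 / 2 ≤ tanh x) (hd : 0 ≤ d) :
    exp d * cosh x ≤ cosh (x + 2 * d) := by
  have hsinh : cosh x / 2 ≤ sinh x := by
    rw [tanh_eq_sinh_div_cosh, le_div_iff₀ (cosh_pos x)] at hx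
    linarith
  have hsinh2 : 0 ≤ sinh (2 * d) := sinh_nonneg_iff.2 (by linarith)
  calc exp d * cosh x ≤ (cosh (2 * d) + sinh (2 * d) / 2) * cosh x := by
        gcongr; exact exp_le_cosh_two_mul_add_sinh_two_mul_div_two hd
    _ ≤ cosh x * cosh (2 * d) + sinh x * sinh (2 * d) := by nlinarith
    _ = cosh (x + 2 * d) := (cosh_add x (2 * d)).symm

noncomputable def isingMap (J t : ℝ) : ℝ := log (cosh (J + t) / cosh (t - J))

theorem continuous_isingMap (J : ℝ) : Continuous (isingMap J) := by
  unfold isingMap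
  fun_prop (disch := intros; positivity)

theorem isingMap_le (J t : ℝ) : isingMap J t ≤ 2 * |J| := by
  have hpos := cosh_pos (t - J)
  rw [isingMap, log_le_iff_le_exp (div_pos (cosh_pos _) hpos), div_le_iff₀ hpos]
  calc cosh (J + t) = cosh (t - J + 2 * J) := by ring_nf
    _ ≤ exp |2 * J| * cosh (t - J) := cosh_add_le_exp_abs_mul_cosh _ _
    _ = exp (2 * |J|) * cosh (t - J) := by rw [abs_mul, abs_two]

theorem le_isingMap_iff {J s : ℝ} :
    s ≤ isingMap J s ↔ exp s * cosh (s - J) ≤ cosh (J + s) := by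
  rw [isingMap, le_log_iff_exp_le (div_pos (cosh_pos _) (cosh_pos _)), le_div_iff₀ (cosh_pos _)]

theorem le_isingMap_add {J t d : ℝ} (ht : t ≤ isingMap J t) (hJt : 1 / 2 ≤ tanh (J + t))
    (hd : 0 ≤ d) : t + d ≤ isingMap (J + d) (t + d) := by
  rw [le_isingMap_iff] at ht ⊢
  calc exp (t + d) * cosh (t + d - (J + d)) = exp d * (exp t * cosh (t - J)) := by
        rw [exp_add]; ring_nf
    _ ≤ exp d * cosh (J + t) := by gcongr
    _ ≤ cosh (J + t + 2 * d) := exp_mul_cosh_le_cosh_add_two_mul hJt hd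
    _ = cosh (J + d + (t + d)) := by ring_nf

theorem exists_isingMap_eq_self_of_le {J s₀ : ℝ} (h : s₀ ≤ isingMap J s₀) :
    ∃ s, s₀ ≤ s ∧ isingMap J s = s := by
  have hb : s₀ ≤ 2 * |J| := h.trans (isingMap_le J s₀)
  obtain ⟨s, hs, hfix⟩ := intermediate_value_Icc' hb
    ((continuous_isingMap J).sub continuous_id).continuousOn
    ⟨sub_nonpos.2 (isingMap_le J _), sub_nonneg.2 h⟩
  exact ⟨s, hs.1, sub_eq_zero.1 hfix⟩

theorem stmt_14_general (Jc : ℝ) (hJc : Real.tanh Jc = 1/2)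
    (J1 J2 : ℝ) (h1 : Jc ≤ J1) (h12 : J1 < J2)
    (t1 t2 : ℝ) (ht1nn : 0 ≤ t1)
    (ht1 : IsGreatest {s : ℝ | Real.log (Real.cosh (J1 + s) / Real.cosh (s - J1)) = s} t1)
    (ht2 : IsGreatest {s : ℝ | Real.log (Real.cosh (J2 + s) / Real.cosh (s - J2)) = s} t2) :
    t1 - J1 ≤ t2 - J2 ∧ t1 + J1 ≤ t2 + J2 := by
  have hhalf : 1 / 2 ≤ tanh (J1 + t1) := hJc ▸ tanh_le_tanh (by linarith)
  have hsub : t1 + (J2 - J1) ≤ isingMap J2 (t1 + (J2 - J1)) := by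
    simpa using le_isingMap_add (ht1.1 : isingMap J1 t1 = t1).ge hhalf (sub_nonneg.2 h12.le)
  obtain ⟨s, hs, hfix⟩ := exists_isingMap_eq_self_of_le hsub
  have hst2 : s ≤ t2 := ht2.2 hfix
  constructor <;> linarith

theorem stmt_14 (Jc : ℝ) (hJc : Real.tanh Jc = 1/2)
    (J1 J2 : ℝ) (h1 : Jc ≤ J1) (h12 : J1 < J2)
    (t1 t2 : ℝ) (ht1nn : 0 ≤ t1) (ht2nn : 0 ≤ t2)
    (ht1 : IsGreatest {s : ℝ | Real.log (Real.cosh (J1 + s) / Real.cosh (s - J1)) = s} t1)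
    (ht2 : IsGreatest {s : ℝ | Real.log (Real.cosh (J2 + s) / Real.cosh (s - J2)) = s} t2) :
    t1 - J1 ≤ t2 - J2 ∧ t1 + J1 ≤ t2 + J2 :=
  stmt_14_general Jc hJc J1 J2 h1 h12 t1 t2 ht1nn ht1 ht2
end

section
/- For $J$ sufficiently large, $f_J(1.1 J) > 1.1 J$, where $f_J(t)=\log(\cosh(J+t)/\cosh(t-J))$; consequently, the largest fixed point $t_J$ of $f_J$ satisfies $t_J > 1.1 J$ for all sufficiently large $J$, and $t_J - J \to \infty$ as $J \to \infty$. -/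
/-! Since `cosh(J + s) ≥ e^{J+s}/2` and `cosh(s - J) ≤ e^{s-J}` for `s ≥ J`, the map
`f_J(s) = log (cosh (J + s) / cosh (s - J))` is at least `2J - log 2` on `[J, ∞)`, which exceeds
`1.1 J` once `J ≥ 1`. On the other hand `f_J ≤ 2J` everywhere, so `f_J(s) - s` changes sign on
`[1.1 J, 2J]` and the intermediate value theorem gives a fixed point above `1.1 J`; the largest
fixed point `t_J` is then larger still, and `t_J - J ≥ 0.1 J → ∞`. -/

open Filter Set

namespace Real

theorem exp_div_two_le_cosh (x : ℝ) : exp x / 2 ≤ cosh x := by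
  rw [cosh_eq]
  linarith [exp_pos (-x)]

theorem cosh_le_exp_of_nonneg {x : ℝ} (hx : 0 ≤ x) : cosh x ≤ exp x := by
  rw [cosh_eq]
  linarith [exp_le_exp.2 (show -x ≤ x by linarith)]

theorem cosh_add_le_exp_mul_cosh (x : ℝ) {d : ℝ} (hd : 0 ≤ d) :
    cosh (x + d) ≤ exp d * cosh x := by
  have h : exp (-(x + d)) ≤ exp d * exp (-x) := by
    rw [← exp_add]
    exact exp_le_exp.2 (by linarith)
  rw [cosh_eq, cosh_eq, exp_add]
  nlinarith [exp_pos x, exp_pos d]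

end Real

open Real

noncomputable def logCoshRatio (J s : ℝ) : ℝ :=
  log (cosh (J + s) / cosh (s - J))

theorem logCoshRatio_eq_sub (J s : ℝ) :
    logCoshRatio J s = log (cosh (J + s)) - log (cosh (s - J)) :=
  log_div (cosh_pos _).ne' (cosh_pos _).ne'

theorem continuous_logCoshRatio (J : ℝ) : Continuous (logCoshRatio J) := by
  unfold logCoshRatio
  exact ((continuous_cosh.comp (continuous_const_add J)).div
    (continuous_cosh.comp (continuous_sub_right J)) fun _ => (cosh_pos _).ne').log
      fun _ => (div_pos (cosh_pos _) (cosh_pos _)).ne'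

theorem logCoshRatio_le {J : ℝ} (hJ : 0 ≤ J) (s : ℝ) : logCoshRatio J s ≤ 2 * J := by
  have h : cosh (J + s) ≤ exp (2 * J) * cosh (s - J) := by
    simpa [show s - J + 2 * J = J + s by ring] using cosh_add_le_exp_mul_cosh (s - J) (d := 2 * J) (by linarith)
  rw [logCoshRatio, ← log_exp (2 * J)]
  exact log_le_log (div_pos (cosh_pos _) (cosh_pos _)) ((div_le_iff₀ (cosh_pos _)).2 h)

theorem two_mul_sub_log_two_le_logCoshRatio {J s : ℝ} (hJs : J ≤ s) :
    2 * J - log 2 ≤ logCoshRatio J s := by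
  have hnum : J + s - log 2 ≤ log (cosh (J + s)) := by
    have := log_le_log (by positivity) (exp_div_two_le_cosh (J + s))
    rwa [log_div (exp_ne_zero _) two_ne_zero, log_exp] at this
  have hden : log (cosh (s - J)) ≤ s - J := by
    simpa using log_le_log (cosh_pos _) (cosh_le_exp_of_nonneg (sub_nonneg.2 hJs))
  rw [logCoshRatio_eq_sub]
  linarith

theorem exists_fixedPoint_mem_Ioc {f : ℝ → ℝ} (hf : Continuous f) {a b : ℝ} (hab : a ≤ b)
    (ha : a < f a) (hb : f b ≤ b) : ∃ s ∈ Ioc a b, f s = s := by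
  have hg : ContinuousOn (fun s => s - f s) (Icc a b) := (continuous_id.sub hf).continuousOn
  obtain ⟨s, hs, hfs⟩ := intermediate_value_Ioc hab hg
    (show (0 : ℝ) ∈ Ioc (a - f a) (b - f b) from ⟨by linarith, by linarith⟩)
  exact ⟨s, hs, (sub_eq_zero.1 hfs).symm⟩

theorem lt_logCoshRatio {J : ℝ} (hJ : 1 ≤ J) : 1.1 * J < logCoshRatio J (1.1 * J) := by
  have := two_mul_sub_log_two_le_logCoshRatio (show J ≤ 1.1 * J by linarith)
  linarith [log_two_lt_d9]

theorem exists_fixedPoint_logCoshRatio_gt {J : ℝ} (hJ : 1 ≤ J) :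
    ∃ s, 1.1 * J < s ∧ logCoshRatio J s = s := by
  obtain ⟨s, hs, hfix⟩ := exists_fixedPoint_mem_Ioc (continuous_logCoshRatio J)
    (show 1.1 * J ≤ 2 * J by linarith) (lt_logCoshRatio hJ) (logCoshRatio_le (by linarith) _)
  exact ⟨s, hs.1, hfix⟩

theorem stmt_15 (t : ℝ → ℝ)
    (ht : ∀ J : ℝ, 1 ≤ J →
      IsGreatest {s : ℝ | Real.log (Real.cosh (J + s) / Real.cosh (s - J)) = s} (t J)) :
    (∃ J0 : ℝ, ∀ J ≥ J0,
        1.1 * J < Real.log (Real.cosh (J + 1.1 * J) / Real.cosh (1.1 * J - J))) ∧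
    (∃ J0 : ℝ, ∀ J ≥ J0, 1.1 * J < t J) ∧
    Tendsto (fun J => t J - J) atTop atTop := by
  have ht_gt : ∀ J ≥ 1, 1.1 * J < t J := fun J hJ => by
    obtain ⟨s, hs, hfix⟩ := exists_fixedPoint_logCoshRatio_gt hJ
    exact hs.trans_le ((ht J hJ).2 hfix)
  refine ⟨⟨1, fun J hJ => lt_logCoshRatio hJ⟩, ⟨1, ht_gt⟩, ?_⟩
  refine tendsto_atTop_mono' atTop ?_ (tendsto_id.const_mul_atTop (by norm_num : (0 : ℝ) < 0.1))
  filter_upwards [eventually_ge_atTop 1] with J hJ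
  rw [id]
  linarith [ht_gt J hJ]
end

section
/- Let $a(k) = \frac{(2k)!}{k!\,(k+1)!}\,\beta^{-k}$ for $k \ge 0$, with $\beta \ge 4$. Then $\lim_{n\to\infty} \Big(\sum_{k=n+1}^{\infty} a(k)\Big)^{1/n} = 4/\beta$. -/
open Filter Real

noncomputable def bb (k : ℕ) : ℝ := (Nat.centralBinom k : ℝ) / 4 ^ k

noncomputable def cc (k : ℕ) : ℝ :=
  ((2*k).factorial : ℝ) / ((k.factorial : ℝ) * ((k+1).factorial : ℝ)) / 4 ^ k

lemma cc_eq (k : ℕ) : cc k = (Nat.centralBinom k : ℝ) / (k+1) / 4 ^ k := by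
  have h : (2*k).factorial = Nat.centralBinom k * k.factorial * k.factorial := by
    rw [Nat.centralBinom]
    have h2 : 2*k - k = k := by omega
    conv_lhs => rw [← Nat.choose_mul_factorial_mul_factorial (by omega : k ≤ 2*k), h2]
  have hfac : ((k+1).factorial : ℝ) = (k+1) * k.factorial := by
    rw [Nat.factorial_succ]; push_cast; ring
  rw [cc, h, hfac]
  push_cast
  have h1 : (k.factorial : ℝ) ≠ 0 := by positivity
  have h2 : ((k:ℝ)+1) ≠ 0 := by positivity
  field_simp

lemma cc_nonneg (k : ℕ) : 0 ≤ cc k := by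
  rw [cc]; positivity

lemma cc_telescope (k : ℕ) : cc k = 2 * (bb k - bb (k+1)) := by
  have h : ((k:ℝ)+1) * (Nat.centralBinom (k+1) : ℝ)
      = 2*(2*(k:ℝ)+1) * (Nat.centralBinom k : ℝ) := by
    exact_mod_cast congrArg (Nat.cast : ℕ → ℝ) (Nat.succ_mul_centralBinom_succ k)
  have h2 : ((k:ℝ)+1) ≠ 0 := by positivity
  have hq : (Nat.centralBinom (k+1) : ℝ)
      = 2*(2*(k:ℝ)+1) * (Nat.centralBinom k : ℝ) / ((k:ℝ)+1) := by
    field_simp; linarith [h]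
  rw [cc_eq, bb, bb, hq, pow_succ]
  have h1 : (4:ℝ)^k ≠ 0 := by positivity
  field_simp
  ring

lemma bb_nonneg (k : ℕ) : 0 ≤ bb k := by rw [bb]; positivity

lemma bb_le_one (k : ℕ) : bb k ≤ 1 := by
  induction k with
  | zero => simp [bb, Nat.centralBinom]
  | succ n ih =>
    have h := cc_nonneg n
    rw [cc_telescope n] at h
    linarith

lemma sum_cc_le (m N : ℕ) : ∑ k ∈ Finset.range N, cc (m + k) ≤ 2 := by
  have : ∑ k ∈ Finset.range N, cc (m + k)
      = 2 * (bb m - bb (m + N)) := by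
    have := Finset.sum_range_sub' (fun k => 2 * bb (m + k)) N
    calc ∑ k ∈ Finset.range N, cc (m + k)
        = ∑ k ∈ Finset.range N, (2 * bb (m+k) - 2 * bb (m+k+1)) := by
          refine Finset.sum_congr rfl fun k _ => ?_
          rw [cc_telescope]; ring_nf
      _ = 2 * bb (m + 0) - 2 * bb (m + N) := by
          rw [← Finset.sum_range_sub' (fun k => 2 * bb (m + k)) N]
          exact Finset.sum_congr rfl fun k _ => by rw [Nat.add_assoc]
      _ = 2 * (bb m - bb (m + N)) := by rw [Nat.add_zero]; ring
  rw [this]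
  have h1 := bb_le_one m
  have h2 := bb_nonneg (m + N)
  linarith

lemma summable_cc_shift (m : ℕ) : Summable (fun k => cc (m + k)) :=
  summable_of_sum_range_le (fun k => cc_nonneg _) (sum_cc_le m)

lemma tsum_cc_le (m : ℕ) : ∑' k, cc (m + k) ≤ 2 :=
  tsum_le_of_sum_range_le (fun k => cc_nonneg _) (sum_cc_le m)

lemma cc_lower (m : ℕ) (hm : 0 < m) :
    1 / (2 * (m:ℝ) * (m + 1)) ≤ cc m := by
  have h := Nat.four_pow_le_two_mul_self_mul_centralBinom m hm
  have h' : (4:ℝ)^m ≤ 2 * m * (Nat.centralBinom m : ℝ) := by exact_mod_cast h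
  rw [cc_eq]
  rw [div_div, div_le_div_iff₀ (by positivity) (by positivity)]
  have h4 : (0:ℝ) < 4^m := by positivity
  have hm' : (0:ℝ) < m := by exact_mod_cast hm
  nlinarith

lemma log_poly_div_tendsto :
    Tendsto (fun n : ℕ => Real.log ((n:ℝ)+2) / n) atTop (nhds 0) := by
  have ht : Tendsto (fun n : ℕ => (n:ℝ) + 2) atTop atTop :=
    tendsto_atTop_add_const_right atTop 2 tendsto_natCast_atTop_atTop
  have h1 : (fun n : ℕ => Real.log ((n:ℝ)+2)) =o[atTop] (fun n : ℕ => (n:ℝ)+2) :=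
    Real.isLittleO_log_id_atTop.comp_tendsto ht
  have h2 : (fun n : ℕ => (n:ℝ)+2) =O[atTop] (fun n : ℕ => (n:ℝ)) := by
    apply Asymptotics.IsBigO.of_bound 3
    filter_upwards [eventually_ge_atTop 1] with n hn
    have hn' : (1:ℝ) ≤ (n:ℝ) := by exact_mod_cast hn
    rw [Real.norm_eq_abs, Real.norm_eq_abs, abs_of_nonneg (by linarith),
      abs_of_nonneg (by linarith)]
    linarith
  exact (h1.trans_isBigO h2).tendsto_div_nhds_zero

theorem stmt_16 (β : ℝ) (hβ : 4 ≤ β) :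
    Tendsto (fun n : ℕ =>
        (∑' k : ℕ, ((2*(n+1+k)).factorial : ℝ) /
            ((n+1+k).factorial * (n+1+k+1).factorial) / β^(n+1+k)) ^ ((n:ℝ)⁻¹))
      atTop (nhds (4 / β)) := by
  have hβ0 : (0:ℝ) < β := by linarith
  set r : ℝ := 4 / β with hr
  have hr0 : 0 < r := by positivity
  have hr1 : r ≤ 1 := by rw [hr, div_le_one hβ0]; exact hβ
  have hterm : ∀ m : ℕ, ((2*m).factorial : ℝ) / ((m.factorial : ℝ) * ((m+1).factorial : ℝ)) / β^m
      = cc m * r^m := by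
    intro m
    rw [cc, hr, div_pow]
    have h1 : (m.factorial : ℝ) ≠ 0 := by positivity
    have h2 : ((m+1).factorial : ℝ) ≠ 0 := by positivity
    field_simp
  -- rewrite the tsum
  have hfun : ∀ n : ℕ, (∑' k : ℕ, ((2*(n+1+k)).factorial : ℝ) /
            ((n+1+k).factorial * (n+1+k+1).factorial) / β^(n+1+k))
      = ∑' k : ℕ, cc (n+1+k) * r^(n+1+k) := by
    intro n; exact tsum_congr fun k => hterm (n+1+k)
  set T : ℕ → ℝ := fun n => ∑' k : ℕ, cc (n+1+k) * r^(n+1+k) with hTdef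
  have hsummable : ∀ n : ℕ, Summable (fun k : ℕ => cc (n+1+k) * r^(n+1+k)) := by
    intro n
    apply Summable.of_nonneg_of_le (fun k => mul_nonneg (cc_nonneg _) (pow_nonneg hr0.le _))
      (fun k => ?_) (summable_cc_shift (n+1))
    calc cc (n+1+k) * r^(n+1+k) ≤ cc (n+1+k) * 1 := by
          exact mul_le_mul_of_nonneg_left (pow_le_one₀ hr0.le hr1) (cc_nonneg _)
      _ = cc (n+1+k) := mul_one _
  have hTupper : ∀ n : ℕ, T n ≤ 2 * r^n := by
    intro n
    have h1 : T n ≤ ∑' k : ℕ, r^n * cc (n+1+k) := by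
      apply Summable.tsum_le_tsum _ (hsummable n) ((summable_cc_shift (n+1)).mul_left _)
      intro k
      rw [mul_comm (r^n)]
      apply mul_le_mul_of_nonneg_left _ (cc_nonneg _)
      exact pow_le_pow_of_le_one hr0.le hr1 (by omega)
    have h2 : ∑' k : ℕ, r^n * cc (n+1+k) = r^n * ∑' k : ℕ, cc (n+1+k) := tsum_mul_left
    rw [h2] at h1
    calc T n ≤ r^n * ∑' k : ℕ, cc (n+1+k) := h1
      _ ≤ r^n * 2 := mul_le_mul_of_nonneg_left (tsum_cc_le (n+1)) (pow_nonneg hr0.le _)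
      _ = 2 * r^n := mul_comm _ _
  have hTlower : ∀ n : ℕ, r^(n+1) / (2 * ((n:ℝ)+1) * ((n:ℝ)+2)) ≤ T n := by
    intro n
    have h0 : cc (n+1) * r^(n+1) ≤ T n := by
      have := Summable.le_tsum (hsummable n) 0 (fun j _ => mul_nonneg (cc_nonneg _) (pow_nonneg hr0.le _))
      simpa using this
    have hcl := cc_lower (n+1) (Nat.succ_pos n)
    have hcast : ((n+1 : ℕ) : ℝ) = (n:ℝ) + 1 := by push_cast; ring
    rw [hcast] at hcl
    calc r^(n+1) / (2 * ((n:ℝ)+1) * ((n:ℝ)+2))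
        = (1 / (2 * ((n:ℝ)+1) * (((n:ℝ)+1) + 1))) * r^(n+1) := by ring_nf
      _ ≤ cc (n+1) * r^(n+1) := by
          apply mul_le_mul_of_nonneg_right _ (pow_nonneg hr0.le _)
          exact hcl
      _ ≤ T n := h0
  have hTpos : ∀ n : ℕ, 0 < T n := fun n =>
    lt_of_lt_of_le (div_pos (pow_pos hr0 _) (by positivity)) (hTlower n)
  -- the log limit
  have key : Tendsto (fun n : ℕ => Real.log (T n) / n) atTop (nhds (Real.log r)) := by
    apply tendsto_of_tendsto_of_tendsto_of_le_of_le'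
      (g := fun n : ℕ => ((n:ℝ)+1)/n * Real.log r - 3 * (Real.log ((n:ℝ)+2) / n))
      (h := fun n : ℕ => Real.log 2 / n + Real.log r)
    · -- lower limit
      have p1 : Tendsto (fun n : ℕ => ((n:ℝ)+1)/n) atTop (nhds 1) := by
        have : Tendsto (fun n : ℕ => 1 + (n:ℝ)⁻¹) atTop (nhds (1 + 0)) :=
          tendsto_const_nhds.add tendsto_inv_atTop_nhds_zero_nat
        rw [add_zero] at this
        apply this.congr'
        filter_upwards [eventually_ge_atTop 1] with n hn
        have hn' : (0:ℝ) < (n:ℝ) := by exact_mod_cast hn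
        field_simp
      have p2 : Tendsto (fun n : ℕ => 3 * (Real.log ((n:ℝ)+2) / n)) atTop (nhds (3 * 0)) :=
        log_poly_div_tendsto.const_mul 3
      rw [mul_zero] at p2
      have := (p1.mul_const (Real.log r)).sub p2
      simpa using this
    · -- upper limit
      have h := (tendsto_const_div_atTop_nhds_zero_nat (Real.log 2)).add_const (Real.log r)
      simpa using h
    · -- lower bound eventually
      filter_upwards [eventually_ge_atTop 1] with n hn
      have hn' : (0:ℝ) < (n:ℝ) := by exact_mod_cast hn
      have hQpos : (0:ℝ) < 2 * ((n:ℝ)+1) * ((n:ℝ)+2) := by positivity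
      have hlog1 : Real.log (r^(n+1) / (2 * ((n:ℝ)+1) * ((n:ℝ)+2))) ≤ Real.log (T n) :=
        Real.log_le_log (div_pos (pow_pos hr0 _) (by positivity)) (hTlower n)
      have hlog2 : Real.log (r^(n+1) / (2 * ((n:ℝ)+1) * ((n:ℝ)+2)))
          = ((n:ℝ)+1) * Real.log r - Real.log (2 * ((n:ℝ)+1) * ((n:ℝ)+2)) := by
        rw [Real.log_div (by positivity) (by positivity), Real.log_pow]
        push_cast; ring
      have hQle : Real.log (2 * ((n:ℝ)+1) * ((n:ℝ)+2)) ≤ 3 * Real.log ((n:ℝ)+2) := by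
        have h3 : 2 * ((n:ℝ)+1) * ((n:ℝ)+2) ≤ ((n:ℝ)+2)^3 := by nlinarith
        calc Real.log (2 * ((n:ℝ)+1) * ((n:ℝ)+2)) ≤ Real.log (((n:ℝ)+2)^3) :=
              Real.log_le_log hQpos h3
          _ = 3 * Real.log ((n:ℝ)+2) := by rw [Real.log_pow]; push_cast; ring
      have hnum : ((n:ℝ)+1) * Real.log r - 3 * Real.log ((n:ℝ)+2) ≤ Real.log (T n) := by
        linarith
      have : (((n:ℝ)+1) * Real.log r - 3 * Real.log ((n:ℝ)+2)) / n ≤ Real.log (T n) / n := by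
        gcongr
      calc ((n:ℝ)+1)/n * Real.log r - 3 * (Real.log ((n:ℝ)+2) / n)
          = (((n:ℝ)+1) * Real.log r - 3 * Real.log ((n:ℝ)+2)) / n := by ring
        _ ≤ Real.log (T n) / n := this
    · -- upper bound eventually
      filter_upwards [eventually_ge_atTop 1] with n hn
      have hn' : (0:ℝ) < (n:ℝ) := by exact_mod_cast hn
      have hlog : Real.log (T n) ≤ Real.log 2 + (n:ℝ) * Real.log r := by
        calc Real.log (T n) ≤ Real.log (2 * r^n) := Real.log_le_log (hTpos n) (hTupper n)
          _ = Real.log 2 + (n:ℝ) * Real.log r := by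
              rw [Real.log_mul (by norm_num) (by positivity), Real.log_pow]
      calc Real.log (T n) / n ≤ (Real.log 2 + (n:ℝ) * Real.log r) / n := by gcongr
        _ = Real.log 2 / n + Real.log r := by field_simp
  -- conclude
  have hexp : Tendsto (fun n : ℕ => Real.exp (Real.log (T n) / n)) atTop
      (nhds (Real.exp (Real.log r))) := (Real.continuous_exp.tendsto _).comp key
  rw [Real.exp_log hr0] at hexp
  apply hexp.congr'
  filter_upwards [eventually_ge_atTop 1] with n hn
  have hn' : (0:ℝ) < (n:ℝ) := by exact_mod_cast hn
  rw [hfun n]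
  rw [Real.rpow_def_of_pos (hTpos n), div_eq_mul_inv]
end
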